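/- Bowen–Gibbs property: with potential φ(y) = B(w_0(y)) and pressure P = log λ, there exists a constant C ≥ 1 such that for every y ∈ {−1,1}^{ℤ₊} and every n ∈ ℤ₊, 1/C ≤ Q(y_0,…,y_n) / exp( Σ_{k=0}^{n} φ(S^k y) − (n+1)·P ) ≤ C, where S is the left shift (S y)_i = y_{i+1} and Q(y_0,…,y_n) = (cosh(J)/λ^{n+1})·Z_{0,n}(y_0,…,y_n). -/

import Mathlib

/-!
Summing out the spins one at a time from the right end gives the transfer-matrix formula
`Z_{0,n}(y) = 2 cosh(w_0^{(n)}) · exp(∑_{k=1}^{n} B(w_k^{(n)}))`, because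
`2 cosh(J ξ + g) = exp(B g + ξ A g)` for `ξ = ±1`. So the logarithm of the Gibbs ratio is
`log(2 cosh J cosh w_0^{(n)}) + ∑_{k=1}^{n} (B(w_k^{(n)}) - B(w_k)) - B(w_0)`.
Now `A` is a `|tanh J|`-contraction fixing `0` and `B` is `1`-Lipschitz with
`log 2 ≤ B u ≤ log 2 + |u| + |J|`. Hence all fields are bounded by `M = |K| / (1 - |tanh J|)`
and `|w_k^{(n)} - w_k| ≤ |tanh J|^{n+1-k} M`, so the error terms form a geometric series and the
log ratio is bounded by `|J| + |K| / (1 - |tanh J|)²`, uniformly in `y` and `n`.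
-/

open Finset Real Filter Topology

lemma abs_sub_le_of_hasDerivAt {f f' : ℝ → ℝ} {C : ℝ} (hf : ∀ x, HasDerivAt f (f' x) x)
    (hC : ∀ x, |f' x| ≤ C) (u v : ℝ) : |f u - f v| ≤ C * |u - v| := by
  simpa only [Real.norm_eq_abs] using
    Convex.norm_image_sub_le_of_norm_hasDerivWithin_le (fun x _ => (hf x).hasDerivWithinAt)
      (fun x _ => hC x) convex_univ (Set.mem_univ v) (Set.mem_univ u)

namespace Real

lemma hasDerivAt_log_cosh (x : ℝ) : HasDerivAt (fun x => log (cosh x)) (tanh x) x := by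
  simpa [tanh_eq_sinh_div_cosh] using (hasDerivAt_cosh x).log (cosh_pos x).ne'

lemma log_cosh_nonneg (x : ℝ) : 0 ≤ log (cosh x) :=
  log_nonneg (one_le_cosh x)

lemma log_cosh_le_abs (x : ℝ) : log (cosh x) ≤ |x| := by
  rw [← cosh_abs, log_le_iff_le_exp (cosh_pos _), cosh_eq]
  linarith [exp_le_exp.mpr (neg_le_self (abs_nonneg x))]

lemma cosh_add_mul_cosh_sub (x y : ℝ) :
    cosh (x + y) * cosh (x - y) = sinh x ^ 2 + cosh y ^ 2 := by
  rw [cosh_add, cosh_sub]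
  nlinarith [cosh_sq' x, cosh_sq' y]

lemma tanh_add_sub_tanh_sub (x y : ℝ) :
    tanh (x + y) - tanh (x - y) = 2 * sinh y * cosh y / (cosh (x + y) * cosh (x - y)) := by
  rw [tanh_eq_sinh_div_cosh, tanh_eq_sinh_div_cosh,
    div_sub_div _ _ (cosh_pos _).ne' (cosh_pos _).ne', ← sinh_sub, ← sinh_two_mul]
  ring_nf

lemma abs_tanh_add_sub_tanh_sub_le (x y : ℝ) :
    |tanh (x + y) - tanh (x - y)| ≤ 2 * |tanh y| := by
  have hy := cosh_pos y
  have hD : 0 < cosh y ^ 2 := pow_pos hy 2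
  rw [tanh_add_sub_tanh_sub, cosh_add_mul_cosh_sub, tanh_eq_sinh_div_cosh]
  calc |2 * sinh y * cosh y / (sinh x ^ 2 + cosh y ^ 2)|
      = 2 * |sinh y| * cosh y / (sinh x ^ 2 + cosh y ^ 2) := by
        rw [abs_div, abs_mul, abs_mul, abs_two, abs_of_pos hy,
          abs_of_pos (add_pos_of_nonneg_of_pos (sq_nonneg _) hD)]
    _ ≤ 2 * |sinh y| * cosh y / cosh y ^ 2 := by gcongr; exact le_add_of_nonneg_left (sq_nonneg _)
    _ = 2 * |sinh y / cosh y| := by rw [abs_div, abs_of_pos hy]; field_simp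

end Real

lemma Fin.sum_univ_fun_snoc {α M : Type*} [Fintype α] [AddCommMonoid M] (n : ℕ)
    (F : (Fin (n + 1) → α) → M) :
    ∑ x, F x = ∑ x : Fin n → α, ∑ a, F (Fin.snoc x a) := by
  rw [← (Fin.snocEquiv fun _ => α).sum_comp, Fintype.sum_prod_type, Finset.sum_comm]
  rfl

lemma sum_range_pow_sub_le {θ : ℝ} (h0 : 0 ≤ θ) (h1 : θ < 1) (n : ℕ) :
    ∑ k ∈ range n, θ ^ (n - k) ≤ θ / (1 - θ) := by
  calc ∑ k ∈ range n, θ ^ (n - k) = ∑ j ∈ range n, θ ^ (1 + j) := by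
        rw [← sum_range_reflect]
        exact sum_congr rfl fun j hj => by rw [mem_range] at hj; congr 1; omega
    _ = ∑ i ∈ Ico 1 (n + 1), θ ^ i := by rw [sum_Ico_eq_sum_range, Nat.add_sub_cancel]
    _ ≤ θ ^ 1 / (1 - θ) := geom_sum_Ico_le_of_lt_one h0 h1
    _ = θ / (1 - θ) := by rw [pow_one]

namespace IsingChain

noncomputable def isingA (J u : ℝ) : ℝ := (1 / 2) * log (cosh (u + J) / cosh (u - J))

noncomputable def isingB (J u : ℝ) : ℝ := (1 / 2) * log (4 * cosh (u + J) * cosh (u - J))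

variable (J : ℝ)

lemma isingA_eq (u : ℝ) : isingA J u = (log (cosh (u + J)) - log (cosh (u - J))) / 2 := by
  rw [isingA, log_div (cosh_pos _).ne' (cosh_pos _).ne']
  ring

lemma isingB_eq (u : ℝ) :
    isingB J u = log 2 + (log (cosh (u + J)) + log (cosh (u - J))) / 2 := by
  rw [isingB, log_mul (by positivity) (cosh_pos _).ne', log_mul (by norm_num) (cosh_pos _).ne',
    show (4 : ℝ) = 2 ^ 2 by norm_num, log_pow]
  ring

lemma isingA_zero : isingA J 0 = 0 := by
  simp [isingA_eq, ← neg_sub J]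

lemma hasDerivAt_isingA (u : ℝ) :
    HasDerivAt (isingA J) ((tanh (u + J) - tanh (u - J)) / 2) u := by
  simp only [funext (isingA_eq J)]
  exact (((hasDerivAt_log_cosh _).comp_add_const u J).sub
    ((hasDerivAt_log_cosh _).comp_sub_const u J)).div_const 2

lemma abs_isingA_sub_le (u v : ℝ) : |isingA J u - isingA J v| ≤ |tanh J| * |u - v| :=
  abs_sub_le_of_hasDerivAt (hasDerivAt_isingA J) (fun x => by
    rw [abs_div, abs_two]; linarith [abs_tanh_add_sub_tanh_sub_le x J]) u v

lemma abs_isingA_le (u : ℝ) : |isingA J u| ≤ |tanh J| * |u| := by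
  simpa [isingA_zero] using abs_isingA_sub_le J u 0

lemma continuous_isingA : Continuous (isingA J) :=
  continuous_iff_continuousAt.mpr fun u => (hasDerivAt_isingA J u).continuousAt

lemma abs_isingB_sub_le (u v : ℝ) : |isingB J u - isingB J v| ≤ |u - v| := by
  have hB : ∀ x, HasDerivAt (isingB J) ((tanh (x + J) + tanh (x - J)) / 2) x := fun x => by
    simp only [funext (isingB_eq J)]
    exact ((((hasDerivAt_log_cosh _).comp_add_const x J).add
      ((hasDerivAt_log_cosh _).comp_sub_const x J)).div_const 2).const_add _
  simpa using abs_sub_le_of_hasDerivAt hB (C := 1) (fun x => by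
    rw [abs_div, abs_two, div_le_one two_pos]
    linarith [abs_add_le (tanh (x + J)) (tanh (x - J)), abs_tanh_lt_one (x + J),
      abs_tanh_lt_one (x - J)]) u v

lemma log_two_le_isingB (u : ℝ) : log 2 ≤ isingB J u := by
  rw [isingB_eq]
  linarith [log_cosh_nonneg (u + J), log_cosh_nonneg (u - J)]

lemma isingB_le (u : ℝ) : isingB J u ≤ log 2 + |u| + |J| := by
  rw [isingB_eq]
  linarith [log_cosh_le_abs (u + J), log_cosh_le_abs (u - J), abs_add_le u J, abs_sub u J]

def isingSpin (b : Bool) : ℝ := if b then 1 else -1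

lemma sum_exp_add_isingSpin_mul (a t : ℝ) :
    ∑ s : Bool, exp (a + isingSpin s * t) = 2 * cosh t * exp a := by
  simp only [Fintype.sum_bool, isingSpin, if_true, one_mul, Bool.false_eq_true, if_false, exp_add,
    cosh_eq]
  ring_nf

lemma two_mul_cosh_mul_isingSpin_add (b : Bool) (g : ℝ) :
    2 * cosh (J * isingSpin b + g) = exp (isingB J g + isingA J g * isingSpin b) := by
  have hexp : ∀ x, 2 * cosh x = exp (log 2 + log (cosh x)) := fun x => by
    rw [exp_add, exp_log two_pos, exp_log (cosh_pos x)]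
  cases b
  · rw [hexp, isingA_eq, isingB_eq, isingSpin, if_neg Bool.false_ne_true]
    ring_nf
  · rw [hexp, isingA_eq, isingB_eq, isingSpin, if_pos rfl]
    ring_nf

variable (K : ℝ) (y : ℕ → ℝ)

noncomputable def energy (n : ℕ) (h : ℝ) (x : Fin (n + 1) → Bool) : ℝ :=
  J * ∑ i : Fin n, isingSpin (x i.castSucc) * isingSpin (x i.succ)
    + K * ∑ i : Fin (n + 1), isingSpin (x i) * y i + h * isingSpin (x (Fin.last n))

noncomputable def partitionFn (n : ℕ) (h : ℝ) : ℝ :=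
  ∑ x, exp (energy J K y n h x)

lemma energy_eq_energy_zero_add (n : ℕ) (h : ℝ) (x : Fin (n + 1) → Bool) :
    energy J K y n h x = energy J K y n 0 x + h * isingSpin (x (Fin.last n)) := by
  simp only [energy, zero_mul, add_zero]

lemma energy_snoc (n : ℕ) (h : ℝ) (x : Fin (n + 1) → Bool) (s : Bool) :
    energy J K y (n + 1) h (Fin.snoc x s) = energy J K y n 0 x
      + isingSpin s * (J * isingSpin (x (Fin.last n)) + (K * y (n + 1) + h)) := by
  simp only [energy]
  conv_lhs => rw [Fin.sum_univ_castSucc, Fin.sum_univ_castSucc]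
  simp only [Fin.snoc_castSucc, Fin.succ_castSucc, Fin.snoc_last, Fin.succ_last, Fin.val_castSucc,
    Fin.val_last]
  ring

lemma partitionFn_zero (h : ℝ) : partitionFn J K y 0 h = 2 * cosh (K * y 0 + h) := by
  have hE : ∀ x : Fin 1 → Bool, energy J K y 0 h x = 0 + isingSpin (x 0) * (K * y 0 + h) := by
    intro x
    simp only [energy, univ_eq_empty, sum_empty, mul_zero, Nat.reduceAdd, univ_unique,
      Fin.default_eq_zero, Fin.val_eq_zero, sum_singleton, zero_add, Fin.last_zero]
    ring
  rw [partitionFn, ← (Equiv.funUnique (Fin 1) Bool).symm.sum_comp]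
  simp only [hE, Equiv.funUnique_symm_apply, uniqueElim_const, sum_exp_add_isingSpin_mul, exp_zero,
    mul_one]

lemma partitionFn_succ (n : ℕ) (h : ℝ) :
    partitionFn J K y (n + 1) h = exp (isingB J (K * y (n + 1) + h))
      * partitionFn J K y n (isingA J (K * y (n + 1) + h)) := by
  simp only [partitionFn, Fin.sum_univ_fun_snoc (n := n + 1), energy_snoc,
    sum_exp_add_isingSpin_mul, two_mul_cosh_mul_isingSpin_add, mul_sum, ← exp_add]
  refine sum_congr rfl fun x _ => ?_
  rw [energy_eq_energy_zero_add J K y n (isingA J _)]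
  ring_nf

theorem partitionFn_eq {n : ℕ} {h : ℝ} {v : ℕ → ℝ} (hlast : v n = K * y n + h)
    (hrec : ∀ i < n, v i = K * y i + isingA J (v (i + 1))) :
    partitionFn J K y n h = 2 * cosh (v 0) * exp (∑ k ∈ range n, isingB J (v (k + 1))) := by
  induction n generalizing h with
  | zero => rw [partitionFn_zero, hlast, range_zero, sum_empty, exp_zero, mul_one]
  | succ n ih =>
    rw [partitionFn_succ, ← hlast, ih (hrec n n.lt_succ_self) fun i hi => hrec i (by omega),
      sum_range_succ, exp_add]
    ring

/-- `v i` plays the role of the field `w_i^{(n)}(y)`. -/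
structure IsFiniteField (A : ℝ → ℝ) (K : ℝ) (y : ℕ → ℝ) (n : ℕ) (v : ℕ → ℝ) :
    Prop where
  eq_zero : ∀ i, n < i → v i = 0
  eq_rec : ∀ i ≤ n, v i = K * y i + A (v (i + 1))

namespace IsFiniteField

variable {A : ℝ → ℝ} {K : ℝ} {y : ℕ → ℝ} {n : ℕ} {v : ℕ → ℝ}

lemma ext {v' : ℕ → ℝ} (hv : IsFiniteField A K y n v) (hv' : IsFiniteField A K y n v') :
    v = v' := by
  funext i
  rcases le_or_gt i (n + 1) with hi | hi
  · induction hi using Nat.decreasingInduction with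
    | self => rw [hv.eq_zero _ n.lt_succ_self, hv'.eq_zero _ n.lt_succ_self]
    | of_succ k hk ih => rw [hv.eq_rec k (by omega), hv'.eq_rec k (by omega), ih]
  · rw [hv.eq_zero i (by omega), hv'.eq_zero i (by omega)]

lemma shift {k : ℕ} (hv : IsFiniteField A K y (n + k) v) :
    IsFiniteField A K (fun i => y (i + k)) n (fun i => v (i + k)) where
  eq_zero i hi := hv.eq_zero (i + k) (by omega)
  eq_rec i hi := by rw [hv.eq_rec (i + k) (by omega), Nat.add_right_comm]

lemma abs_le {θ : ℝ} (hA : ∀ u, |A u| ≤ θ * |u|) (hθ0 : 0 ≤ θ) (hθ1 : θ < 1)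
    (hy : ∀ i, |y i| ≤ 1) (hv : IsFiniteField A K y n v) (i : ℕ) :
    |v i| ≤ |K| / (1 - θ) := by
  have hM : 0 ≤ |K| / (1 - θ) := div_nonneg (abs_nonneg K) (by linarith)
  have hKM : |K| + θ * (|K| / (1 - θ)) = |K| / (1 - θ) := by
    field_simp [(by linarith : (1 - θ) ≠ 0)]; ring
  rcases le_or_gt i (n + 1) with hi | hi
  · induction hi using Nat.decreasingInduction with
    | self => rwa [hv.eq_zero _ n.lt_succ_self, abs_zero]
    | of_succ k hk ih =>
      rw [hv.eq_rec k (by omega)]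
      calc |K * y k + A (v (k + 1))| ≤ |K| * |y k| + θ * |v (k + 1)| :=
            (abs_add_le _ _).trans (by rw [abs_mul]; exact add_le_add le_rfl (hA _))
        _ ≤ |K| * 1 + θ * (|K| / (1 - θ)) := by gcongr; exact hy k
        _ = |K| / (1 - θ) := by rw [mul_one, hKM]
  · rwa [hv.eq_zero i (by omega), abs_zero]

lemma abs_sub_le {θ M : ℝ} {w : ℕ → ℝ} (hA : ∀ u u', |A u - A u'| ≤ θ * |u - u'|)
    (hθ0 : 0 ≤ θ) (hv : IsFiniteField A K y n v) (hw : ∀ i, w i = K * y i + A (w (i + 1)))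
    (hwM : ∀ i, |w i| ≤ M) {i : ℕ} (hi : i ≤ n + 1) :
    |v i - w i| ≤ θ ^ (n + 1 - i) * M := by
  induction hi using Nat.decreasingInduction with
  | self =>
    rw [hv.eq_zero _ n.lt_succ_self, zero_sub, abs_neg, Nat.sub_self, pow_zero, one_mul]
    exact hwM _
  | of_succ k hk ih =>
    rw [hv.eq_rec k (by omega), hw k, add_sub_add_left_eq_sub,
      show n + 1 - k = n + 1 - (k + 1) + 1 by omega, pow_succ']
    calc |A (v (k + 1)) - A (w (k + 1))| ≤ θ * |v (k + 1) - w (k + 1)| := hA _ _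
      _ ≤ θ * (θ ^ (n + 1 - (k + 1)) * M) := by gcongr
      _ = _ := by ring

end IsFiniteField

section Limit

variable {A : ℝ → ℝ} {K : ℝ} {y : ℕ → ℝ} {W : ℕ → ℕ → ℝ} {w : ℕ → ℝ}

lemma eq_rec_of_tendsto (hA : Continuous A) (hW : ∀ n, IsFiniteField A K y n (W n))
    (hlim : ∀ i, Tendsto (fun n => W n i) atTop (𝓝 (w i))) (i : ℕ) :
    w i = K * y i + A (w (i + 1)) := by
  refine tendsto_nhds_unique (hlim i)
    (((hA.tendsto _).comp (hlim (i + 1))).const_add _ |>.congr' ?_)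
  filter_upwards [eventually_ge_atTop i] with n hn
  exact ((hW n).eq_rec i hn).symm

lemma eq_of_tendsto_shift {k : ℕ} {W' : ℕ → ℕ → ℝ} {a a' : ℝ}
    (hW : ∀ n, IsFiniteField A K y n (W n))
    (hW' : ∀ n, IsFiniteField A K (fun i => y (i + k)) n (W' n))
    (hlim : Tendsto (fun n => W n k) atTop (𝓝 a))
    (hlim' : Tendsto (fun n => W' n 0) atTop (𝓝 a')) :
    a' = a := by
  have hW'W : ∀ n, W' n 0 = W (n + k) k := fun n => by
    rw [(hW' n).ext (hW (n + k)).shift]; simp only [zero_add]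
  exact tendsto_nhds_unique (hlim'.congr hW'W) (hlim.comp (tendsto_add_atTop_nat k))

end Limit

variable {J K : ℝ} {y : ℕ → ℝ} {n : ℕ} {v : ℕ → ℝ}

lemma gibbsRatio_eq {lam : ℝ} (hlam : 0 < lam) (hv : IsFiniteField (isingA J) K y n v) (S : ℝ) :
    (cosh J / lam ^ (n + 1) * ∑ x : Fin (n + 1) → Bool,
        exp (J * ∑ i : Fin n, isingSpin (x i.castSucc) * isingSpin (x i.succ)
          + K * ∑ i : Fin (n + 1), isingSpin (x i) * y i))
      / exp (S - (n + 1) * log lam)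
      = exp (log (2 * cosh J * cosh (v 0)) + ∑ k ∈ range n, isingB J (v (k + 1)) - S) := by
  have hZ := partitionFn_eq J K y (h := 0)
    (by rw [hv.eq_rec n le_rfl, hv.eq_zero _ n.lt_succ_self, isingA_zero])
    fun i hi => hv.eq_rec i hi.le
  simp only [partitionFn, energy, zero_mul, add_zero] at hZ
  have hlamn : exp ((n + 1) * log lam) = lam ^ (n + 1) := by
    rw [← exp_log (pow_pos hlam (n + 1)), log_pow]; push_cast; rfl
  rw [hZ, exp_sub, exp_sub, exp_add, hlamn, exp_log (by positivity)]
  field_simp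

lemma abs_sum_isingB_sub_le {w : ℕ → ℝ} {M : ℝ} (hv : IsFiniteField (isingA J) K y n v)
    (hw : ∀ i, w i = K * y i + isingA J (w (i + 1))) (hwM : ∀ i, |w i| ≤ M) (hM : 0 ≤ M) :
    |∑ k ∈ range n, (isingB J (v (k + 1)) - isingB J (w (k + 1)))|
      ≤ |tanh J| / (1 - |tanh J|) * M :=
  calc _ ≤ ∑ k ∈ range n, |isingB J (v (k + 1)) - isingB J (w (k + 1))| :=
        abs_sum_le_sum_abs _ _
    _ ≤ ∑ k ∈ range n, |tanh J| ^ (n - k) * M := sum_le_sum fun k hk =>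
        (abs_isingB_sub_le J _ _).trans <| by
          simpa using hv.abs_sub_le (abs_isingA_sub_le J) (abs_nonneg _) hw hwM (i := k + 1)
            (by have := mem_range.mp hk; omega)
    _ = (∑ k ∈ range n, |tanh J| ^ (n - k)) * M := (sum_mul _ _ _).symm
    _ ≤ |tanh J| / (1 - |tanh J|) * M := mul_le_mul_of_nonneg_right
        (sum_range_pow_sub_le (abs_nonneg _) (abs_tanh_lt_one J) n) hM

lemma abs_gibbsExponent_le {w : ℕ → ℝ} (hy : ∀ i, |y i| ≤ 1)
    (hv : IsFiniteField (isingA J) K y n v) (hw : ∀ i, w i = K * y i + isingA J (w (i + 1)))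
    (hwM : ∀ i, |w i| ≤ |K| / (1 - |tanh J|)) :
    |log (2 * cosh J * cosh (v 0)) + ∑ k ∈ range n, isingB J (v (k + 1))
        - ∑ k ∈ range (n + 1), isingB J (w k)| ≤ |J| + |K| / (1 - |tanh J|) ^ 2 := by
  set θ := |tanh J|
  set M := |K| / (1 - θ)
  have hθ0 : 0 ≤ θ := abs_nonneg _
  have hθ1 : θ < 1 := abs_tanh_lt_one J
  have hv0 : |v 0| ≤ M := hv.abs_le (abs_isingA_le J) hθ0 hθ1 hy 0
  have hdiff := abs_sum_isingB_sub_le hv hw hwM ((abs_nonneg _).trans hv0)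
  have hlog : log (2 * cosh J * cosh (v 0)) = log 2 + log (cosh J) + log (cosh (v 0)) := by
    rw [log_mul (by positivity) (cosh_pos _).ne', log_mul two_ne_zero (cosh_pos _).ne']
  have hMM : M + θ / (1 - θ) * M = |K| / (1 - θ) ^ 2 := by
    simp only [M]; field_simp [(by linarith : (1 - θ) ≠ 0)]; ring
  rw [sum_sub_distrib, abs_le] at hdiff
  rw [sum_range_succ', abs_le]
  constructor <;> linarith [log_two_le_isingB J (w 0), isingB_le J (w 0), hwM 0, log_cosh_nonneg J,
    log_cosh_le_abs J, log_cosh_nonneg (v 0), log_cosh_le_abs (v 0)]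

end IsingChain

open IsingChain

theorem stmt_15_general (J K lam : ℝ)
    (hlam : lam = 4 * Real.cosh J * Real.cosh K)
    (A B : ℝ → ℝ)
    (hA : ∀ u, A u = (1 / 2) * Real.log (Real.cosh (u + J) / Real.cosh (u - J)))
    (hB : ∀ u, B u = (1 / 2) * Real.log (4 * Real.cosh (u + J) * Real.cosh (u - J)))
    (spin : Bool → ℝ) (hspin : ∀ b, spin b = if b then 1 else -1)
    (W : (ℕ → ℝ) → ℕ → ℕ → ℝ)
    (hW0 : ∀ (y : ℕ → ℝ) (n i : ℕ), n < i → W y n i = 0)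
    (hWrec : ∀ (y : ℕ → ℝ) (n i : ℕ), i ≤ n → W y n i = K * y i + A (W y n (i + 1)))
    (wlim : (ℕ → ℝ) → ℕ → ℝ)
    (hwlim : ∀ (y : ℕ → ℝ) (i : ℕ),
      Filter.Tendsto (fun n => W y n i) Filter.atTop (nhds (wlim y i)))
    (φ : (ℕ → ℝ) → ℝ)
    (hφ : ∀ y : ℕ → ℝ, φ y = B (wlim y 0)) :
    ∃ C ≥ (1 : ℝ),
      ∀ y : ℕ → ℝ, (∀ i, y i = 1 ∨ y i = -1) → ∀ n : ℕ,
        1 / C ≤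
          (Real.cosh J / lam ^ (n + 1) *
            ∑ x : Fin (n + 1) → Bool,
              Real.exp (J * ∑ i : Fin n, spin (x i.castSucc) * spin (x i.succ)
                + K * ∑ i : Fin (n + 1), spin (x i) * y i))
          / Real.exp ((∑ k ∈ Finset.range (n + 1), φ (fun i => y (i + k)))
              - (n + 1) * Real.log lam) ∧
        (Real.cosh J / lam ^ (n + 1) *
            ∑ x : Fin (n + 1) → Bool,
              Real.exp (J * ∑ i : Fin n, spin (x i.castSucc) * spin (x i.succ)
                + K * ∑ i : Fin (n + 1), spin (x i) * y i))
          / Real.exp ((∑ k ∈ Finset.range (n + 1), φ (fun i => y (i + k)))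
              - (n + 1) * Real.log lam) ≤ C := by
  obtain rfl : spin = isingSpin := funext hspin
  obtain rfl : A = isingA J := funext hA
  obtain rfl : B = isingB J := funext hB
  have hlam0 : 0 < lam := hlam ▸ mul_pos (mul_pos four_pos (cosh_pos J)) (cosh_pos K)
  have hW : ∀ y n, IsFiniteField (isingA J) K y n (W y n) := fun y n => ⟨hW0 y n, hWrec y n⟩
  refine ⟨exp (|J| + |K| / (1 - |tanh J|) ^ 2), one_le_exp (by positivity), fun y hy n => ?_⟩
  have hy1 : ∀ i, |y i| ≤ 1 := fun i => by rcases hy i with h | h <;> simp [h]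
  have hwM : ∀ i, |wlim y i| ≤ |K| / (1 - |tanh J|) := fun i =>
    le_of_tendsto (hwlim y i).abs <| Eventually.of_forall fun m =>
      (hW y m).abs_le (abs_isingA_le J) (abs_nonneg _) (abs_tanh_lt_one J) hy1 i
  have hφk : ∀ k, φ (fun i => y (i + k)) = isingB J (wlim y k) := fun k => by
    rw [hφ, eq_of_tendsto_shift (hW y) (hW _) (hwlim y k) (hwlim _ 0)]
  rw [sum_congr rfl fun k _ => hφk k, gibbsRatio_eq hlam0 (hW y n)]
  have hE := abs_le.mp <| abs_gibbsExponent_le hy1 (hW y n)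
    (eq_rec_of_tendsto (continuous_isingA J) (hW y) (hwlim y)) hwM
  exact ⟨by rw [one_div, ← exp_neg]; exact exp_le_exp.mpr hE.1, exp_le_exp.mpr hE.2⟩

/-- Bowen–Gibbs property: with potential `φ(y) = B(w_0(y))` and pressure
`P = log λ`, there exists a constant `C ≥ 1` such that for every `y ∈ {−1,1}^{ℤ₊}` and
every `n ∈ ℤ₊`,
`1/C ≤ Q(y_0,…,y_n) / exp( Σ_{k=0}^{n} φ(S^k y) − (n+1)·P ) ≤ C`,
where `S` is the left shift `(S y)_i = y_{i+1}` (so `(S^k y)_i = y_{i+k}`) and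
`Q(y_0,…,y_n) = (cosh(J)/λ^{n+1})·Z_{0,n}(y_0,…,y_n)`. Here `W y n i = w_i^{(n)}(y)`,
`wlim y i = w_i(y)`, and spin configurations are encoded by `x : Fin (n+1) → Bool`. -/
theorem stmt_15 (p ε : ℝ) (hp0 : 0 < p) (hp1 : p < 1) (hp2 : p ≠ 1 / 2)
    (hε0 : 0 < ε) (hε1 : ε < 1)
    (J K lam : ℝ)
    (hJ : J = (1 / 2) * Real.log ((1 - p) / p))
    (hK : K = (1 / 2) * Real.log ((1 - ε) / ε))
    (hlam : lam = 4 * Real.cosh J * Real.cosh K)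
    (A B : ℝ → ℝ)
    (hA : ∀ u, A u = (1 / 2) * Real.log (Real.cosh (u + J) / Real.cosh (u - J)))
    (hB : ∀ u, B u = (1 / 2) * Real.log (4 * Real.cosh (u + J) * Real.cosh (u - J)))
    (spin : Bool → ℝ) (hspin : ∀ b, spin b = if b then 1 else -1)
    (W : (ℕ → ℝ) → ℕ → ℕ → ℝ)
    (hW0 : ∀ (y : ℕ → ℝ) (n i : ℕ), n < i → W y n i = 0)
    (hWrec : ∀ (y : ℕ → ℝ) (n i : ℕ), i ≤ n → W y n i = K * y i + A (W y n (i + 1)))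
    (wlim : (ℕ → ℝ) → ℕ → ℝ)
    (hwlim : ∀ (y : ℕ → ℝ) (i : ℕ),
      Filter.Tendsto (fun n => W y n i) Filter.atTop (nhds (wlim y i)))
    (φ : (ℕ → ℝ) → ℝ)
    (hφ : ∀ y : ℕ → ℝ, φ y = B (wlim y 0)) :
    ∃ C ≥ (1 : ℝ),
      ∀ y : ℕ → ℝ, (∀ i, y i = 1 ∨ y i = -1) → ∀ n : ℕ,
        1 / C ≤
          (Real.cosh J / lam ^ (n + 1) *
            ∑ x : Fin (n + 1) → Bool,
              Real.exp (J * ∑ i : Fin n, spin (x i.castSucc) * spin (x i.succ)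
                + K * ∑ i : Fin (n + 1), spin (x i) * y i))
          / Real.exp ((∑ k ∈ Finset.range (n + 1), φ (fun i => y (i + k)))
              - (n + 1) * Real.log lam) ∧
        (Real.cosh J / lam ^ (n + 1) *
            ∑ x : Fin (n + 1) → Bool,
              Real.exp (J * ∑ i : Fin n, spin (x i.castSucc) * spin (x i.succ)
                + K * ∑ i : Fin (n + 1), spin (x i) * y i))
          / Real.exp ((∑ k ∈ Finset.range (n + 1), φ (fun i => y (i + k)))
              - (n + 1) * Real.log lam) ≤ C :=
  stmt_15_general J K lam hlam A B hA hB spin hspin W hW0 hWrec wlim hwlim φ hφ
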